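/- arXiv:2104.00444 — 2 statements merged into one kernel-verified Lean document; each statement's English description precedes it below -/
import Mathlib

section
/- For every continuous function ψ : ℝ → ℝ, every ε ∈ (0,1), and all constants K₂, K₃ > 0, the clamped function ψ̃_ε is bounded on ℝ, Lipschitz continuous on ℝ, and satisfies |ψ̃_ε(r)|² ≤ K₂ β̂_ε(r) + K₃ as well as |ψ̃_ε(r)| ≤ |ψ_ε(r)| for every r ∈ ℝ. -/
open MeasureTheory Filter Set ENNReal

/-- The truncation `ψ^ε` of a function `ψ : ℝ → ℝ` at level `ε`. -/
noncomputable def trunc (ψ : ℝ → ℝ) (ε : ℝ) (r : ℝ) : ℝ :=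
  if |r| ≤ 1 / ε then ψ r else ψ (Real.sign r / ε)

/-- The regularization `ψ_ε(r) = (1/(2ε)) ∫_{r-ε}^{r+ε} ψ^ε(s) ds`. -/
noncomputable def reg (ψ : ℝ → ℝ) (ε : ℝ) (r : ℝ) : ℝ :=
  (1 / (2 * ε)) * ∫ s in (r - ε)..(r + ε), trunc ψ ε s

/-- The Moreau–Yosida regularization `β̂_ε(r) = inf_s ((r−s)²/(2ε) + β̂(s))`
of a `[0,+∞]`-valued function `β̂`, as a real-valued function. -/
noncomputable def moreau (βh : ℝ → ℝ≥0∞) (ε : ℝ) (r : ℝ) : ℝ :=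
  (⨅ s : ℝ, ENNReal.ofReal ((r - s) ^ 2 / (2 * ε)) + βh s).toReal

/-- The clamped regularization
`ψ̃_ε(r) = max{ −(K₂ β̂_ε(r) + K₃)^{1/2}, min{ ψ_ε(r), (K₂ β̂_ε(r) + K₃)^{1/2} } }`. -/
noncomputable def clamp (ψ : ℝ → ℝ) (βh : ℝ → ℝ≥0∞) (K₂ K₃ ε : ℝ) (r : ℝ) : ℝ :=
  max (-Real.sqrt (K₂ * moreau βh ε r + K₃))
    (min (reg ψ ε r) (Real.sqrt (K₂ * moreau βh ε r + K₃)))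

private lemma sqrt_sum_le (a b : ℝ) (ha : 0 ≤ a) (hb : 0 ≤ b) :
    Real.sqrt (a + b) ≤ Real.sqrt a + Real.sqrt b := by
  have h1 : Real.sqrt a ^ 2 = a := Real.sq_sqrt ha
  have h2 : Real.sqrt b ^ 2 = b := Real.sq_sqrt hb
  have hR : 0 ≤ Real.sqrt a + Real.sqrt b := by positivity
  calc Real.sqrt (a + b) ≤ Real.sqrt ((Real.sqrt a + Real.sqrt b) ^ 2) := by
        apply Real.sqrt_le_sqrt
        nlinarith [Real.sqrt_nonneg a, Real.sqrt_nonneg b]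
    _ = Real.sqrt a + Real.sqrt b := Real.sqrt_sq hR

private lemma sqrt_quad_lip (lam c t u : ℝ) (hlam : 0 ≤ lam) (hc : 0 ≤ c) :
    Real.sqrt (lam * t ^ 2 + c) ≤ Real.sqrt (lam * u ^ 2 + c) + Real.sqrt lam * |t - u| := by
  set S := Real.sqrt (lam * u ^ 2 + c) with hSdef
  have hSnn : 0 ≤ S := Real.sqrt_nonneg _
  have hS : S ^ 2 = lam * u ^ 2 + c := Real.sq_sqrt (by positivity)
  have hL : Real.sqrt lam ^ 2 = lam := Real.sq_sqrt hlam
  have hLnn : 0 ≤ Real.sqrt lam := Real.sqrt_nonneg _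
  have h1 : Real.sqrt lam * |u| ≤ S := by
    rw [hSdef, ← Real.sqrt_sq_eq_abs, ← Real.sqrt_mul hlam]
    exact Real.sqrt_le_sqrt (by nlinarith)
  have hR : 0 ≤ S + Real.sqrt lam * |t - u| := by positivity
  calc Real.sqrt (lam * t ^ 2 + c)
      ≤ Real.sqrt ((S + Real.sqrt lam * |t - u|) ^ 2) := by
        apply Real.sqrt_le_sqrt
        have h2 : u * (t - u) ≤ |u| * |t - u| := by
          calc u * (t - u) ≤ |u * (t - u)| := le_abs_self _
            _ = |u| * |t - u| := abs_mul _ _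
        have h3 : Real.sqrt lam * |u| * (Real.sqrt lam * |t - u|)
            ≤ S * (Real.sqrt lam * |t - u|) :=
          mul_le_mul_of_nonneg_right h1 (by positivity)
        have h4 : |t - u| ^ 2 = (t - u) ^ 2 := sq_abs _
        nlinarith [abs_nonneg (t - u), abs_nonneg u,
          mul_le_mul_of_nonneg_left h2 hlam]
    _ = S + Real.sqrt lam * |t - u| := Real.sqrt_sq hR

/-- For a continuous `ψ`, a convex, proper, l.s.c. function `β̂ : ℝ → [0,+∞]` with
`β̂(0) = 0` and `β̂(r) → +∞` as `|r| → +∞`, every `ε ∈ (0,1)` and all constants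
`K₂, K₃ > 0`, the clamped function `ψ̃_ε` is bounded on `ℝ`, Lipschitz continuous on `ℝ`,
and satisfies `|ψ̃_ε(r)|² ≤ K₂ β̂_ε(r) + K₃` and `|ψ̃_ε(r)| ≤ |ψ_ε(r)|` for every `r`. -/
theorem stmt5 (ψ : ℝ → ℝ) (hψ : Continuous ψ) (βh : ℝ → ℝ≥0∞)
    (hconv : ∀ x y : ℝ, ∀ a b : ℝ, 0 ≤ a → 0 ≤ b → a + b = 1 →
      βh (a * x + b * y) ≤ ENNReal.ofReal a * βh x + ENNReal.ofReal b * βh y)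
    (hproper : ∃ r : ℝ, βh r ≠ ⊤)
    (hlsc : LowerSemicontinuous βh)
    (hzero : βh 0 = 0)
    (hcoercive : Filter.Tendsto βh (Filter.cocompact ℝ) Filter.atTop)
    (ε K₂ K₃ : ℝ) (hε : ε ∈ Set.Ioo (0 : ℝ) 1) (hK₂ : 0 < K₂) (hK₃ : 0 < K₃) :
    (∃ C : ℝ, ∀ r : ℝ, |clamp ψ βh K₂ K₃ ε r| ≤ C) ∧
    (∃ L : NNReal, LipschitzWith L (clamp ψ βh K₂ K₃ ε)) ∧
    (∀ r : ℝ, |clamp ψ βh K₂ K₃ ε r| ^ 2 ≤ K₂ * moreau βh ε r + K₃) ∧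
    (∀ r : ℝ, |clamp ψ βh K₂ K₃ ε r| ≤ |reg ψ ε r|) := by
  obtain ⟨hε0, hε1⟩ := hε
  -- basic facts about moreau
  have hmor_nonneg : ∀ r : ℝ, 0 ≤ moreau βh ε r := fun r => ENNReal.toReal_nonneg
  set I : ℝ → ℝ≥0∞ := fun r => ⨅ s : ℝ, ENNReal.ofReal ((r - s) ^ 2 / (2 * ε)) + βh s with hI
  have hIfin : ∀ r : ℝ, I r ≠ ⊤ := by
    intro r
    have h0 : I r ≤ ENNReal.ofReal ((r - 0) ^ 2 / (2 * ε)) + βh 0 :=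
      iInf_le (fun s => ENNReal.ofReal ((r - s) ^ 2 / (2 * ε)) + βh s) 0
    rw [hzero, add_zero] at h0
    exact ne_top_of_le_ne_top ENNReal.ofReal_ne_top h0
  have hmor_eq : ∀ r : ℝ, moreau βh ε r = (I r).toReal := fun r => rfl
  have hupper : ∀ r s : ℝ, βh s ≠ ⊤ →
      moreau βh ε r ≤ (r - s) ^ 2 / (2 * ε) + (βh s).toReal := by
    intro r s hs
    have h0 : I r ≤ ENNReal.ofReal ((r - s) ^ 2 / (2 * ε)) + βh s := iInf_le _ s
    have := ENNReal.toReal_mono (by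
      exact ENNReal.add_ne_top.2 ⟨ENNReal.ofReal_ne_top, hs⟩) h0
    rwa [ENNReal.toReal_add ENNReal.ofReal_ne_top hs,
      ENNReal.toReal_ofReal (by positivity)] at this
  have hnear : ∀ (r' δ : ℝ), 0 < δ → ∃ s : ℝ, βh s ≠ ⊤ ∧
      (r' - s) ^ 2 / (2 * ε) + (βh s).toReal ≤ moreau βh ε r' + δ := by
    intro r' δ hδ
    have hlt : I r' < I r' + ENNReal.ofReal δ :=
      ENNReal.lt_add_right (hIfin r') (by simp [ENNReal.ofReal_eq_zero]; linarith)
    obtain ⟨s, hs⟩ := iInf_lt_iff.mp hlt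
    have hstop : βh s ≠ ⊤ := by
      intro h
      rw [h] at hs
      simp at hs
    refine ⟨s, hstop, ?_⟩
    have hle := ENNReal.toReal_mono (by
      exact ENNReal.add_ne_top.2 ⟨hIfin r', ENNReal.ofReal_ne_top⟩) hs.le
    rwa [ENNReal.toReal_add ENNReal.ofReal_ne_top hstop,
      ENNReal.toReal_add (hIfin r') ENNReal.ofReal_ne_top,
      ENNReal.toReal_ofReal (by positivity), ENNReal.toReal_ofReal hδ.le,
      ← hmor_eq] at hle
  -- Lipschitz estimate for h(r) = sqrt (K₂ * moreau r + K₃)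
  set h : ℝ → ℝ := fun r => Real.sqrt (K₂ * moreau βh ε r + K₃) with hhdef
  have hlam : (0 : ℝ) ≤ K₂ / (2 * ε) := by positivity
  have hone : ∀ r r' : ℝ, h r ≤ h r' + Real.sqrt (K₂ / (2 * ε)) * |r - r'| := by
    intro r r'
    refine le_of_forall_pos_le_add fun η hη => ?_
    obtain ⟨s, hstop, hs⟩ := hnear r' (η ^ 2 / K₂) (by positivity)
    set b : ℝ := (βh s).toReal with hb
    have hbnn : 0 ≤ b := ENNReal.toReal_nonneg
    have step1 : h r ≤ Real.sqrt (K₂ / (2 * ε) * (r - s) ^ 2 + (K₂ * b + K₃)) := by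
      apply Real.sqrt_le_sqrt
      have h0 := hupper r s hstop
      rw [← hb] at h0
      have h1 := mul_le_mul_of_nonneg_left h0 hK₂.le
      have h2 : K₂ * ((r - s) ^ 2 / (2 * ε) + b) = K₂ / (2 * ε) * (r - s) ^ 2 + K₂ * b := by
        ring
      linarith
    have step2 : Real.sqrt (K₂ / (2 * ε) * (r - s) ^ 2 + (K₂ * b + K₃))
        ≤ Real.sqrt (K₂ / (2 * ε) * (r' - s) ^ 2 + (K₂ * b + K₃))
          + Real.sqrt (K₂ / (2 * ε)) * |r - r'| := by
      have := sqrt_quad_lip (K₂ / (2 * ε)) (K₂ * b + K₃) (r - s) (r' - s) hlam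
        (by positivity)
      simpa using this
    have step3 : Real.sqrt (K₂ / (2 * ε) * (r' - s) ^ 2 + (K₂ * b + K₃))
        ≤ h r' + η := by
      have hmono : Real.sqrt (K₂ / (2 * ε) * (r' - s) ^ 2 + (K₂ * b + K₃))
          ≤ Real.sqrt ((K₂ * moreau βh ε r' + K₃) + η ^ 2) := by
        apply Real.sqrt_le_sqrt
        have h1 := mul_le_mul_of_nonneg_left hs hK₂.le
        have h2 : K₂ * ((r' - s) ^ 2 / (2 * ε) + b) = K₂ / (2 * ε) * (r' - s) ^ 2 + K₂ * b := by
          ring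
        have h3 : K₂ * (moreau βh ε r' + η ^ 2 / K₂) = K₂ * moreau βh ε r' + η ^ 2 := by
          field_simp
        linarith
      have hsub : Real.sqrt ((K₂ * moreau βh ε r' + K₃) + η ^ 2)
          ≤ h r' + η := by
        have := sqrt_sum_le (K₂ * moreau βh ε r' + K₃) (η ^ 2)
          (by nlinarith [hmor_nonneg r']) (by positivity)
        rwa [Real.sqrt_sq hη.le] at this
      linarith
    linarith
  have hLiph : LipschitzWith (Real.sqrt (K₂ / (2 * ε))).toNNReal h := by
    apply LipschitzWith.of_dist_le_mul
    intro x y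
    rw [Real.dist_eq, Real.dist_eq, Real.coe_toNNReal _ (Real.sqrt_nonneg _)]
    rw [abs_le]
    constructor
    · have := hone y x
      rw [abs_sub_comm] at this
      linarith
    · have := hone x y
      linarith
  -- bound on trunc
  obtain ⟨M, hM⟩ := (isCompact_Icc (a := -(1 / ε)) (b := 1 / ε)).exists_bound_of_continuousOn
    hψ.continuousOn
  set M' : ℝ := max M 0 with hM'
  have hM'nn : 0 ≤ M' := le_max_right _ _
  have htrunc_bd : ∀ x : ℝ, |trunc ψ ε x| ≤ M' := by
    intro x
    unfold trunc
    split_ifs with hx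
    · obtain ⟨h1, h2⟩ := abs_le.mp hx
      exact le_trans (hM x ⟨h1, h2⟩) (le_max_left _ _)
    · push_neg at hx
      have hxne : x ≠ 0 := by
        intro h0
        rw [h0, abs_zero] at hx
        have : (0:ℝ) < 1 / ε := by positivity
        linarith
      have hmem : Real.sign x / ε ∈ Icc (-(1 / ε)) (1 / ε) := by
        have hpos1 : (0:ℝ) < 1 / ε := by positivity
        rcases lt_or_gt_of_ne hxne with hneg | hpos
        · rw [Real.sign_of_neg hneg]
          rw [neg_div]
          exact ⟨le_rfl, by linarith⟩
        · rw [Real.sign_of_pos hpos]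
          exact ⟨by linarith, le_rfl⟩
      exact le_trans (hM _ hmem) (le_max_left _ _)
  have hsign : Measurable Real.sign := by
    have hrepr : Real.sign = fun r : ℝ => if r < 0 then (-1 : ℝ) else if 0 < r then 1 else 0 := by
      funext r; rfl
    rw [hrepr]
    exact Measurable.ite (measurableSet_lt measurable_id measurable_const)
      measurable_const
      (Measurable.ite (measurableSet_lt measurable_const measurable_id)
        measurable_const measurable_const)
  have hmeas : Measurable (trunc ψ ε) := by
    unfold trunc
    exact Measurable.ite (measurableSet_le measurable_id.abs measurable_const)
      hψ.measurable (hψ.measurable.comp (hsign.div_const ε))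
  have hint : ∀ a b : ℝ, IntervalIntegrable (trunc ψ ε) volume a b := by
    intro a b
    rw [intervalIntegrable_iff]
    apply Measure.integrableOn_of_bounded measure_Ioc_lt_top.ne
      hmeas.aestronglyMeasurable
    filter_upwards with x
    rw [Real.norm_eq_abs]
    exact htrunc_bd x
  -- bound on reg
  have hreg_bd : ∀ r : ℝ, |reg ψ ε r| ≤ M' := by
    intro r
    have hib : ‖∫ s in (r - ε)..(r + ε), trunc ψ ε s‖
        ≤ M' * |(r + ε) - (r - ε)| :=
      intervalIntegral.norm_integral_le_of_norm_le_const fun x _ => by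
        rw [Real.norm_eq_abs]; exact htrunc_bd x
    rw [Real.norm_eq_abs] at hib
    have habs : |(r + ε) - (r - ε)| = 2 * ε := by
      rw [abs_of_nonneg (by linarith)]; ring
    rw [habs] at hib
    unfold reg
    rw [abs_mul, abs_of_nonneg (by positivity : (0:ℝ) ≤ 1 / (2 * ε))]
    rw [div_mul_eq_mul_div, one_mul, div_le_iff₀ (by positivity)]
    linarith
  -- Lipschitz estimate for reg
  have hreg_lip : ∀ x y : ℝ, |reg ψ ε x - reg ψ ε y| ≤ M' / ε * |x - y| := by
    intro x y
    have e1 := intervalIntegral.integral_add_adjacent_intervals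
      (hint (x - ε) (y - ε)) (hint (y - ε) (x + ε))
    have e2 := intervalIntegral.integral_add_adjacent_intervals
      (hint (y - ε) (y + ε)) (hint (y + ε) (x + ε))
    have n1 : |∫ s in (x - ε)..(y - ε), trunc ψ ε s| ≤ M' * |x - y| := by
      have := intervalIntegral.norm_integral_le_of_norm_le_const
        (a := x - ε) (b := y - ε) (C := M') (f := trunc ψ ε) fun z _ => by
          rw [Real.norm_eq_abs]; exact htrunc_bd z
      rw [Real.norm_eq_abs] at this
      have : |∫ s in (x - ε)..(y - ε), trunc ψ ε s| ≤ M' * |y - x| := by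
        convert this using 3; ring
      rwa [abs_sub_comm y x] at this
    have n2 : |∫ s in (y + ε)..(x + ε), trunc ψ ε s| ≤ M' * |x - y| := by
      have := intervalIntegral.norm_integral_le_of_norm_le_const
        (a := y + ε) (b := x + ε) (C := M') (f := trunc ψ ε) fun z _ => by
          rw [Real.norm_eq_abs]; exact htrunc_bd z
      rw [Real.norm_eq_abs] at this
      convert this using 3
      ring
    have ediff : (∫ s in (x - ε)..(x + ε), trunc ψ ε s)
        - (∫ s in (y - ε)..(y + ε), trunc ψ ε s)
        = (∫ s in (x - ε)..(y - ε), trunc ψ ε s)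
          + (∫ s in (y + ε)..(x + ε), trunc ψ ε s) := by
      rw [← e1, ← e2]; ring
    unfold reg
    rw [← mul_sub, abs_mul, abs_of_nonneg (by positivity : (0:ℝ) ≤ 1 / (2 * ε)),
      ediff]
    have habs := abs_add_le (∫ s in (x - ε)..(y - ε), trunc ψ ε s)
      (∫ s in (y + ε)..(x + ε), trunc ψ ε s)
    rw [div_mul_eq_mul_div, one_mul, div_le_iff₀ (by positivity)]
    have : M' / ε * |x - y| * (2 * ε) = 2 * (M' * |x - y|) := by
      field_simp
    rw [this]
    linarith
  have hLipreg : LipschitzWith (M' / ε).toNNReal (reg ψ ε) := by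
    apply LipschitzWith.of_dist_le_mul
    intro x y
    rw [Real.dist_eq, Real.dist_eq, Real.coe_toNNReal _ (by positivity)]
    exact hreg_lip x y
  -- pointwise bounds on clamp
  have hsqnn : ∀ r : ℝ, 0 ≤ Real.sqrt (K₂ * moreau βh ε r + K₃) :=
    fun r => Real.sqrt_nonneg _
  have habs1 : ∀ r : ℝ, |clamp ψ βh K₂ K₃ ε r|
      ≤ Real.sqrt (K₂ * moreau βh ε r + K₃) := by
    intro r
    rw [abs_le]
    unfold clamp
    refine ⟨le_max_left _ _, max_le ?_ (min_le_right _ _)⟩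
    linarith [hsqnn r]
  have habs2 : ∀ r : ℝ, |clamp ψ βh K₂ K₃ ε r| ≤ |reg ψ ε r| := by
    intro r
    rw [abs_le]
    unfold clamp
    constructor
    · apply le_max_of_le_right
      exact le_min (neg_abs_le _) (by linarith [hsqnn r, abs_nonneg (reg ψ ε r)])
    · exact max_le (by linarith [hsqnn r, abs_nonneg (reg ψ ε r)])
        (le_trans (min_le_left _ _) (le_abs_self _))
  refine ⟨⟨M', fun r => le_trans (habs2 r) (hreg_bd r)⟩, ?_, ?_, habs2⟩
  · -- Lipschitz
    refine ⟨max (Real.sqrt (K₂ / (2 * ε))).toNNReal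
      (max (M' / ε).toNNReal (Real.sqrt (K₂ / (2 * ε))).toNNReal), ?_⟩
    have : clamp ψ βh K₂ K₃ ε = fun r => max (-h r) (min (reg ψ ε r) (h r)) := rfl
    rw [this]
    exact LipschitzWith.max hLiph.neg (LipschitzWith.min hLipreg hLiph)
  · intro r
    have h1 := habs1 r
    have h2 : 0 ≤ K₂ * moreau βh ε r + K₃ := by nlinarith [hmor_nonneg r]
    have h3 := Real.sq_sqrt h2
    nlinarith [abs_nonneg (clamp ψ βh K₂ K₃ ε r)]
end

section
/- Let ψ : ℝ → ℝ be continuous with |ψ(r)| ≤ K₀ |r|^α + K₁ for every r ∈ ℝ, where α, K₀, K₁ > 0, and let K₂, K₃ > 0. Then, with M_α := sup_{r ∈ ℝ} (|r|+1)^α / (|r|^α + 1), the clamped regularizations satisfy |ψ̃_ε(r)| ≤ K₀ M_α |r|^α + (K₀ M_α + K₁) for every r ∈ ℝ and every ε ∈ (0,1). -/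
open MeasureTheory Filter Set ENNReal

/-- The constant `M_α := sup_{r ∈ ℝ} (|r|+1)^α / (|r|^α + 1)`. -/
noncomputable def Malpha (α : ℝ) : ℝ :=
  sSup (Set.range fun r : ℝ => (|r| + 1) ^ α / (|r| ^ α + 1))

/-- If `ψ` is continuous with `|ψ(r)| ≤ K₀ |r|^α + K₁` (`α, K₀, K₁ > 0`) and `K₂, K₃ > 0`,
then, with `M_α := sup_r (|r|+1)^α/(|r|^α+1)`, the clamped regularizations satisfy
`|ψ̃_ε(r)| ≤ K₀ M_α |r|^α + (K₀ M_α + K₁)` for every `r ∈ ℝ` and every `ε ∈ (0,1)`. -/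
theorem stmt7 (ψ : ℝ → ℝ) (hψ : Continuous ψ) (βh : ℝ → ℝ≥0∞)
    (hconv : ∀ x y : ℝ, ∀ a b : ℝ, 0 ≤ a → 0 ≤ b → a + b = 1 →
      βh (a * x + b * y) ≤ ENNReal.ofReal a * βh x + ENNReal.ofReal b * βh y)
    (hproper : ∃ r : ℝ, βh r ≠ ⊤)
    (hlsc : LowerSemicontinuous βh)
    (hzero : βh 0 = 0)
    (hcoercive : Filter.Tendsto βh (Filter.cocompact ℝ) Filter.atTop)
    (α K₀ K₁ K₂ K₃ : ℝ) (hα : 0 < α) (hK₀ : 0 < K₀) (hK₁ : 0 < K₁)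
    (hK₂ : 0 < K₂) (hK₃ : 0 < K₃)
    (hgrowth : ∀ r : ℝ, |ψ r| ≤ K₀ * |r| ^ α + K₁) :
    ∀ ε ∈ Set.Ioo (0 : ℝ) 1, ∀ r : ℝ,
      |clamp ψ βh K₂ K₃ ε r| ≤ K₀ * Malpha α * |r| ^ α + (K₀ * Malpha α + K₁) := by

  intro ε hε r
  obtain ⟨hε0, hε1⟩ := hε
  -- The clamp is bounded in absolute value by |reg ψ ε r|
  have h1 : |clamp ψ βh K₂ K₃ ε r| ≤ |reg ψ ε r| := by
    unfold clamp
    rw [abs_le]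
    constructor
    · refine le_max_of_le_right (le_min (neg_abs_le _) ?_)
      exact le_trans (neg_nonpos_of_nonneg (abs_nonneg _)) (Real.sqrt_nonneg _)
    · exact max_le (le_trans (neg_nonpos_of_nonneg (Real.sqrt_nonneg _)) (abs_nonneg _))
        (le_trans (min_le_left _ _) (le_abs_self _))
  set C : ℝ := K₀ * (|r| + 1) ^ α + K₁ with hCdef
  -- Bound on the truncation over the integration interval
  have hC : ∀ s ∈ Set.uIoc (r - ε) (r + ε), ‖trunc ψ ε s‖ ≤ C := by
    intro s hs
    rw [Set.uIoc_of_le (by linarith)] at hs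
    have hs1 : |s| ≤ |r| + 1 := by
      rw [abs_le]
      constructor
      · have := neg_abs_le r; linarith [hs.1]
      · have := le_abs_self r; linarith [hs.2]
    have key : ∀ t : ℝ, |t| ≤ |r| + 1 → ‖ψ t‖ ≤ C := by
      intro t ht
      refine le_trans (hgrowth t) ?_
      have : |t| ^ α ≤ (|r| + 1) ^ α :=
        Real.rpow_le_rpow (abs_nonneg t) ht (le_of_lt hα)
      nlinarith
    unfold trunc
    split_ifs with h
    · exact key s hs1
    · refine key _ ?_
      push_neg at h
      have hsign : |Real.sign s| ≤ 1 := by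
        rcases lt_trichotomy s 0 with h' | h' | h'
        · rw [Real.sign_of_neg h']; norm_num
        · rw [h', Real.sign_zero]; norm_num
        · rw [Real.sign_of_pos h']; norm_num
      have : |Real.sign s / ε| ≤ 1 / ε := by
        rw [abs_div, abs_of_pos hε0]
        exact div_le_div_of_nonneg_right hsign hε0.le
      calc |Real.sign s / ε| ≤ 1 / ε := this
        _ ≤ |s| := le_of_lt h
        _ ≤ |r| + 1 := hs1
  have hintC : ‖∫ s in (r - ε)..(r + ε), trunc ψ ε s‖ ≤ C * |(r + ε) - (r - ε)| :=
    intervalIntegral.norm_integral_le_of_norm_le_const hC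
  have habs : |(r + ε) - (r - ε)| = 2 * ε := by
    rw [show (r + ε) - (r - ε) = 2 * ε by ring, abs_of_pos (by linarith)]
  have hreg : |reg ψ ε r| ≤ C := by
    unfold reg
    rw [abs_mul, abs_of_pos (by positivity : (0:ℝ) < 1 / (2 * ε))]
    rw [habs] at hintC
    calc 1 / (2 * ε) * |∫ s in (r - ε)..(r + ε), trunc ψ ε s|
        ≤ 1 / (2 * ε) * (C * (2 * ε)) := by
          apply mul_le_mul_of_nonneg_left hintC (by positivity)
      _ = C := by field_simp
  -- Bound involving Malpha
  have hbdd : BddAbove (Set.range fun x : ℝ => (|x| + 1) ^ α / (|x| ^ α + 1)) := by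
    refine ⟨2 ^ α, ?_⟩
    rintro _ ⟨x, rfl⟩
    have hpos : (0:ℝ) < |x| ^ α + 1 := by positivity
    rw [div_le_iff₀ hpos]
    rcases le_total (|x|) 1 with h | h
    · have h1 : (|x| + 1) ^ α ≤ 2 ^ α :=
        Real.rpow_le_rpow (by positivity) (by linarith) (le_of_lt hα)
      have h2 : (0:ℝ) ≤ |x| ^ α := Real.rpow_nonneg (abs_nonneg x) α
      have h3 : (0:ℝ) ≤ (2:ℝ) ^ α := Real.rpow_nonneg (by norm_num) α
      nlinarith
    · have h1 : (|x| + 1) ^ α ≤ (2 * |x|) ^ α :=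
        Real.rpow_le_rpow (by positivity) (by linarith) (le_of_lt hα)
      have h2 : (2 * |x|) ^ α = 2 ^ α * |x| ^ α :=
        Real.mul_rpow (by norm_num) (abs_nonneg x)
      have h3 : (0:ℝ) ≤ (2:ℝ) ^ α := Real.rpow_nonneg (by norm_num) α
      nlinarith
  have hMr : (|r| + 1) ^ α / (|r| ^ α + 1) ≤ Malpha α :=
    le_csSup hbdd ⟨r, rfl⟩
  have hpos : (0:ℝ) < |r| ^ α + 1 := by positivity
  have hM : (|r| + 1) ^ α ≤ Malpha α * (|r| ^ α + 1) := by
    rw [div_le_iff₀ hpos] at hMr; linarith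
  calc |clamp ψ βh K₂ K₃ ε r| ≤ C := le_trans h1 hreg
    _ ≤ K₀ * Malpha α * |r| ^ α + (K₀ * Malpha α + K₁) := by
        rw [hCdef]; nlinarith
end
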